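/- arXiv:2407.19676 — 2 statements merged into one kernel-verified Lean document; each statement's English description precedes it below -/
import Mathlib

section
/- Let n be a positive integer, let x⋆ ∈ {0,1}^n, and let Q be a symmetric real n×n matrix with the x⋆-sign pattern, i.e., Q_{ij} > 0 whenever x⋆_i x⋆_j = 1 and Q_{ij} < 0 otherwise. Let x ∈ {0,1}^n satisfy x_i ≤ x⋆_i for all i (the support of x is contained in that of x⋆), and let k be an index with x_k = 0 and x⋆_k = 1. Then f_Q(flip_k(x)) > f_Q(x), where f_Q(x) = xᵀQx and flip_k(x) is x with its k-th coordinate flipped. -/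
/-! Turning on bit `k` of a vector with `x k = 0` changes `xᵀQx` by
`∑ i, (Q i k + Q k i) * x i + Q k k`. The diagonal term is positive since `x⋆_k = 1`, and each
cross term is nonnegative: it vanishes unless `x i ≠ 0`, which forces `x⋆_i = 1`, and then both
`Q i k` and `Q k i` are positive. -/

/-- UBQP objective `f_Q(x) = xᵀQx`. -/
def fQ {n : ℕ} (Q : Fin n → Fin n → ℝ) (x : Fin n → ℝ) : ℝ :=
  ∑ i, ∑ j, Q i j * x i * x j

/-- `flipBit x k` is `x` with its `k`-th coordinate flipped (`0 ↔ 1` on binary vectors). -/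
def flipBit {n : ℕ} (x : Fin n → ℝ) (k : Fin n) : Fin n → ℝ :=
  Function.update x k (1 - x k)

/-- `x` is a binary (0/1) vector. -/
def IsBinary {n : ℕ} (x : Fin n → ℝ) : Prop := ∀ i, x i = 0 ∨ x i = 1

/-- `Q` has the `x⋆`-sign pattern: `Q i j > 0` whenever `x⋆_i x⋆_j = 1`, and `Q i j < 0`
otherwise. -/
def SignPattern {n : ℕ} (xs : Fin n → ℝ) (Q : Fin n → Fin n → ℝ) : Prop :=
  ∀ i j, (xs i * xs j = 1 → 0 < Q i j) ∧ (xs i * xs j ≠ 1 → Q i j < 0)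

theorem fQ_add_single {n : ℕ} (Q : Fin n → Fin n → ℝ) (x : Fin n → ℝ) (k : Fin n) (t : ℝ) :
    fQ Q (x + Pi.single k t) = fQ Q x + t * ∑ i, (Q i k + Q k i) * x i + t ^ 2 * Q k k := by
  simp only [fQ, Pi.add_apply, Pi.single_apply, mul_add, add_mul, Finset.sum_add_distrib,
    mul_ite, mul_zero, ite_mul, zero_mul, Finset.sum_ite_eq', Finset.mem_univ, if_true]
  rw [Finset.sum_comm (f := fun i j => if i = k then _ else _)]
  simp only [Finset.sum_ite_eq', Finset.mem_univ, if_true, Finset.mul_sum]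
  grind

theorem flipBit_eq_add_single {n : ℕ} {x : Fin n → ℝ} {k : Fin n} (hxk : x k = 0) :
    flipBit x k = x + Pi.single k 1 := by
  ext i
  rcases eq_or_ne i k with rfl | hik
  · simp [flipBit, hxk]
  · simp [flipBit, hik]

theorem IsBinary.nonneg {n : ℕ} {x : Fin n → ℝ} (hx : IsBinary x) (i : Fin n) : 0 ≤ x i := by
  rcases hx i with h | h <;> simp [h]

theorem SignPattern.pos_of_eq_one {n : ℕ} {xs : Fin n → ℝ} {Q : Fin n → Fin n → ℝ}
    (hQ : SignPattern xs Q) {i j : Fin n} (hi : xs i = 1) (hj : xs j = 1) : 0 < Q i j :=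
  (hQ i j).1 (by rw [hi, hj, mul_one])

theorem SignPattern.add_mul_nonneg_of_le {n : ℕ} {xs : Fin n → ℝ} {Q : Fin n → Fin n → ℝ}
    (hQ : SignPattern xs Q) (hxs : IsBinary xs) {i k : Fin n} (hk : xs k = 1) {a : ℝ}
    (ha : 0 ≤ a) (hai : a ≤ xs i) : 0 ≤ (Q i k + Q k i) * a := by
  rcases hxs i with hi | hi
  · simp [le_antisymm (hi ▸ hai) ha]
  · exact mul_nonneg (add_pos (hQ.pos_of_eq_one hi hk) (hQ.pos_of_eq_one hk hi)).le ha

theorem flip_on_missing_support_improves_general {n : ℕ}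
    (xs : Fin n → ℝ) (hxs : IsBinary xs)
    (Q : Fin n → Fin n → ℝ)
    (hQ : SignPattern xs Q)
    (x : Fin n → ℝ) (hx : IsBinary x) (hsub : ∀ i, x i ≤ xs i)
    (k : Fin n) (hxk : x k = 0) (hxsk : xs k = 1) :
    fQ Q x < fQ Q (flipBit x k) := by
  have hcross : 0 ≤ ∑ i, (Q i k + Q k i) * x i :=
    Finset.sum_nonneg fun i _ => hQ.add_mul_nonneg_of_le hxs hxsk (hx.nonneg i) (hsub i)
  have hdiag : 0 < Q k k := hQ.pos_of_eq_one hxsk hxsk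
  rw [flipBit_eq_add_single hxk, fQ_add_single, one_mul, one_pow, one_mul]
  linarith

/-- if the support of `x` is contained in that of `x⋆`, turning on a missing
support bit strictly increases the objective of a matrix with the `x⋆`-sign pattern. -/
theorem flip_on_missing_support_improves {n : ℕ} (hn : 0 < n)
    (xs : Fin n → ℝ) (hxs : IsBinary xs)
    (Q : Fin n → Fin n → ℝ) (hQsymm : ∀ i j, Q i j = Q j i)
    (hQ : SignPattern xs Q)
    (x : Fin n → ℝ) (hx : IsBinary x) (hsub : ∀ i, x i ≤ xs i)
    (k : Fin n) (hxk : x k = 0) (hxsk : xs k = 1) :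
    fQ Q x < fQ Q (flipBit x k) :=
  flip_on_missing_support_improves_general xs hxs Q hQ x hx hsub k hxk hxsk
end

section
/- Let n be a positive integer, let x⋆ ∈ {0,1}^n, let Q be any symmetric real n×n matrix, let Q̂ be a symmetric real n×n matrix with the x⋆-sign pattern (Q̂_{ij} > 0 whenever x⋆_i x⋆_j = 1 and Q̂_{ij} < 0 otherwise), and let α > 0. Then there exists λ₀ ∈ [0, 1) such that for every λ ∈ (λ₀, 1], the matrix Q_λ = (1 − λ)Q + λαQ̂ has the x⋆-sign pattern, and consequently x⋆ is the unique 1-bit-flip local maximum and the unique global maximum over {0,1}^n of the smoothed objective g_λ(x) = (1 − λ) xᵀQx + λα xᵀQ̂x. -/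
/-!
For a matrix `M` with the `x⋆`-sign pattern, `xᵀMx` increases whenever a binary vector `x` is
replaced by a binary `y` such that every product `yᵢyⱼ` that differs from `xᵢxⱼ` agrees with
`x⋆ᵢx⋆ⱼ`: each term `Mᵢⱼ (yᵢyⱼ - xᵢxⱼ)` is then nonnegative, and the diagonal term at a changed
coordinate is positive. Taking `y = x⋆` gives strict global maximality; for `x ≠ x⋆`, flipping
a coordinate where `x` is `1` and `x⋆` is `0` (or, if there is none, one where `x` is `0` and
`x⋆` is `1`) is such a move, so no other `x` is a 1-bit-flip local maximum. Finally, the sign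
pattern is a finite conjunction of strict inequalities between continuous functions of `λ`,
which hold at `λ = 1`, so it persists on some interval `(λ₀, 1]`.
-/

open Filter Topology Set

variable {n : ℕ}

def IsFlipLocalMax (M : Fin n → Fin n → ℝ) (x : Fin n → ℝ) : Prop :=
  ∀ k, fQ M (flipBit x k) ≤ fQ M x

theorem fQ_sub_fQ (M : Fin n → Fin n → ℝ) (x y : Fin n → ℝ) :
    fQ M y - fQ M x = ∑ i, ∑ j, M i j * (y i * y j - x i * x j) := by
  simp only [fQ, ← Finset.sum_sub_distrib, mul_sub, mul_assoc]

theorem fQ_add_mul (Q P : Fin n → Fin n → ℝ) (a b : ℝ) (x : Fin n → ℝ) :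
    fQ (fun i j => a * Q i j + b * P i j) x = a * fQ Q x + b * fQ P x := by
  simp only [fQ, Finset.mul_sum, ← Finset.sum_add_distrib, add_mul, mul_assoc]

theorem flipBit_apply_self (x : Fin n → ℝ) (k : Fin n) : flipBit x k k = 1 - x k :=
  Function.update_self ..

theorem flipBit_apply_of_ne (x : Fin n → ℝ) {i k : Fin n} (h : i ≠ k) : flipBit x k i = x i :=
  Function.update_of_ne h ..

namespace IsBinary

variable {x : Fin n → ℝ}

theorem mul_self (hx : IsBinary x) (i : Fin n) : x i * x i = x i := by
  rcases hx i with h | h <;> simp [h]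

theorem mul_eq_zero_or_eq_one (hx : IsBinary x) (i j : Fin n) :
    x i * x j = 0 ∨ x i * x j = 1 := by
  rcases hx i with h | h <;> simp [h, hx j]

theorem eq_one_of_mul_eq_one (hx : IsBinary x) {i j : Fin n} (h : x i * x j = 1) :
    x i = 1 ∧ x j = 1 := by
  rcases hx i with hi | hi <;> rcases hx j with hj | hj <;> simp_all

theorem flipBit_apply_ne (hx : IsBinary x) (k : Fin n) : flipBit x k k ≠ x k := by
  rw [flipBit_apply_self]
  rcases hx k with h | h <;> norm_num [h]

theorem flipBit (hx : IsBinary x) (k : Fin n) : IsBinary (flipBit x k) := by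
  intro i
  rcases eq_or_ne i k with rfl | h
  · rw [flipBit_apply_self]
    rcases hx i with h | h <;> norm_num [h]
  · rw [flipBit_apply_of_ne x h]
    exact hx i

end IsBinary

namespace SignPattern

variable {xs : Fin n → ℝ} {M : Fin n → Fin n → ℝ}

theorem mul_left (hM : SignPattern xs M) {α : ℝ} (hα : 0 < α) :
    SignPattern xs (fun i j => α * M i j) := fun i j =>
  ⟨fun h => mul_pos hα ((hM i j).1 h), fun h => mul_neg_of_pos_of_neg hα ((hM i j).2 h)⟩

theorem eventually_nhds {X : Type*} [TopologicalSpace X] {F : X → Fin n → Fin n → ℝ} {t : X}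
    (hF : ∀ i j, ContinuousAt (fun s => F s i j) t) (h : SignPattern xs (F t)) :
    ∀ᶠ s in 𝓝 t, SignPattern xs (F s) := by
  simp only [SignPattern, eventually_all]
  intro i j
  by_cases hij : xs i * xs j = 1
  · filter_upwards [(hF i j).eventually_const_lt ((h i j).1 hij)] with s hs
    exact ⟨fun _ => hs, fun h' => absurd hij h'⟩
  · filter_upwards [(hF i j).eventually_lt_const ((h i j).2 hij)] with s hs
    exact ⟨fun h' => absurd h' hij, fun _ => hs⟩

theorem mul_sub_pos (hxs : IsBinary xs) (hM : SignPattern xs M) {i j : Fin n} {p q : ℝ}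
    (hp : p = 0 ∨ p = 1) (hqp : q ≠ p) (hq : q = xs i * xs j) : 0 < M i j * (q - p) := by
  subst hq
  rcases hxs.mul_eq_zero_or_eq_one i j with h | h
  · have hp1 : p = 1 := hp.resolve_left fun hp0 => hqp (h.trans hp0.symm)
    rw [h, hp1]
    nlinarith [(hM i j).2 (by rw [h]; norm_num)]
  · have hp0 : p = 0 := hp.resolve_right fun hp1 => hqp (h.trans hp1.symm)
    rw [h, hp0]
    nlinarith [(hM i j).1 h]

theorem fQ_lt_fQ (hxs : IsBinary xs) (hM : SignPattern xs M) {x y : Fin n → ℝ}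
    (hx : IsBinary x) (hy : IsBinary y)
    (hmove : ∀ i j, y i * y j ≠ x i * x j → y i * y j = xs i * xs j) {k : Fin n}
    (hk : y k ≠ x k) : fQ M x < fQ M y := by
  have hpos : ∀ i j, y i * y j ≠ x i * x j → 0 < M i j * (y i * y j - x i * x j) :=
    fun i j hne => hM.mul_sub_pos hxs (hx.mul_eq_zero_or_eq_one i j) hne (hmove i j hne)
  have hnonneg : ∀ i j, 0 ≤ M i j * (y i * y j - x i * x j) := fun i j => by
    by_cases h : y i * y j = x i * x j
    · simp [h]
    · exact (hpos i j h).le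
  rw [← sub_pos, fQ_sub_fQ]
  refine Finset.sum_pos' (fun i _ => Finset.sum_nonneg fun j _ => hnonneg i j)
    ⟨k, Finset.mem_univ _, Finset.sum_pos' (fun j _ => hnonneg k j) ⟨k, Finset.mem_univ _, ?_⟩⟩
  exact hpos k k (by rwa [hx.mul_self, hy.mul_self])

theorem fQ_lt_of_ne (hxs : IsBinary xs) (hM : SignPattern xs M) {x : Fin n → ℝ}
    (hx : IsBinary x) (hne : x ≠ xs) : fQ M x < fQ M xs := by
  obtain ⟨k, hk⟩ := Function.ne_iff.mp hne
  exact hM.fQ_lt_fQ hxs hx hxs (fun _ _ _ => rfl) (Ne.symm hk)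

theorem isFlipLocalMax (hxs : IsBinary xs) (hM : SignPattern xs M) : IsFlipLocalMax M xs :=
  fun k => (hM.fQ_lt_of_ne hxs (hxs.flipBit k)
    (Function.ne_iff.mpr ⟨k, hxs.flipBit_apply_ne k⟩)).le

theorem fQ_lt_fQ_flipBit_of_eq_one_of_eq_zero (hxs : IsBinary xs) (hM : SignPattern xs M)
    {x : Fin n → ℝ} (hx : IsBinary x) {k : Fin n} (hxk : x k = 1) (hxsk : xs k = 0) :
    fQ M x < fQ M (flipBit x k) := by
  have hyk : flipBit x k k = 0 := by rw [flipBit_apply_self, hxk, sub_self]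
  refine hM.fQ_lt_fQ hxs hx (hx.flipBit k) (fun i j hne => ?_) (hx.flipBit_apply_ne k)
  rcases eq_or_ne i k with rfl | hi
  · rw [hyk, hxsk, zero_mul, zero_mul]
  rcases eq_or_ne j k with rfl | hj
  · rw [hyk, hxsk, mul_zero, mul_zero]
  exact absurd (by rw [flipBit_apply_of_ne x hi, flipBit_apply_of_ne x hj]) hne

theorem fQ_lt_fQ_flipBit_of_le (hxs : IsBinary xs) (hM : SignPattern xs M)
    {x : Fin n → ℝ} (hx : IsBinary x) (hle : ∀ j, x j = 1 → xs j = 1) {k : Fin n}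
    (hxk : x k = 0) (hxsk : xs k = 1) : fQ M x < fQ M (flipBit x k) := by
  have hyle : ∀ j, flipBit x k j = 1 → xs j = 1 := fun j hj => by
    rcases eq_or_ne j k with rfl | h
    · exact hxsk
    · exact hle j (by rwa [flipBit_apply_of_ne x h] at hj)
  have hne_k : ∀ j, x j = 1 → j ≠ k := by
    rintro j hj rfl
    simp [hxk] at hj
  refine hM.fQ_lt_fQ hxs hx (hx.flipBit k) (fun i j hne => ?_) (hx.flipBit_apply_ne k)
  have hx0 : x i * x j = 0 := by
    refine (hx.mul_eq_zero_or_eq_one i j).resolve_right fun h1 => hne ?_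
    obtain ⟨hi, hj⟩ := hx.eq_one_of_mul_eq_one h1
    rw [flipBit_apply_of_ne x (hne_k i hi), flipBit_apply_of_ne x (hne_k j hj)]
  rw [hx0] at hne
  have hy1 := ((hx.flipBit k).mul_eq_zero_or_eq_one i j).resolve_left hne
  obtain ⟨hi, hj⟩ := (hx.flipBit k).eq_one_of_mul_eq_one hy1
  rw [hy1, hyle i hi, hyle j hj, one_mul]

theorem exists_fQ_lt_fQ_flipBit (hxs : IsBinary xs) (hM : SignPattern xs M) {x : Fin n → ℝ}
    (hx : IsBinary x) (hne : x ≠ xs) : ∃ k, fQ M x < fQ M (flipBit x k) := by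
  by_cases hout : ∃ k, x k = 1 ∧ xs k = 0
  · obtain ⟨k, hxk, hxsk⟩ := hout
    exact ⟨k, hM.fQ_lt_fQ_flipBit_of_eq_one_of_eq_zero hxs hx hxk hxsk⟩
  · push Not at hout
    have hle : ∀ j, x j = 1 → xs j = 1 := fun j hj => (hxs j).resolve_left (hout j hj)
    obtain ⟨k, hk⟩ := Function.ne_iff.mp hne
    have hxk : x k = 0 := (hx k).resolve_right fun h => hk (h.trans (hle k h).symm)
    have hxsk : xs k = 1 := (hxs k).resolve_left fun h => hk (hxk.trans h.symm)
    exact ⟨k, hM.fQ_lt_fQ_flipBit_of_le hxs hx hle hxk hxsk⟩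

theorem eq_of_isFlipLocalMax (hxs : IsBinary xs) (hM : SignPattern xs M) {x : Fin n → ℝ}
    (hx : IsBinary x) (hmax : IsFlipLocalMax M x) : x = xs := by
  by_contra hne
  obtain ⟨k, hk⟩ := hM.exists_fQ_lt_fQ_flipBit hxs hx hne
  exact (hmax k).not_gt hk

end SignPattern

theorem exists_Ioc_signPattern_mix {xs : Fin n → ℝ} (Q Qhat : Fin n → Fin n → ℝ)
    (hQhat : SignPattern xs Qhat) {α : ℝ} (hα : 0 < α) :
    ∃ l < 1, ∀ lam ∈ Ioc l 1,
      SignPattern xs (fun i j => (1 - lam) * Q i j + lam * α * Qhat i j) := by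
  have hnhds := SignPattern.eventually_nhds (t := (1 : ℝ))
    (F := fun lam i j => (1 - lam) * Q i j + lam * α * Qhat i j)
    (fun i j => by fun_prop) (by simpa using hQhat.mul_left hα)
  exact mem_nhdsLE_iff_exists_Ioc_subset.mp (nhdsWithin_le_nhds hnhds)

theorem hc_transformation_unimodal_for_large_lambda_general {n : ℕ}
    (xs : Fin n → ℝ) (hxs : IsBinary xs)
    (Q : Fin n → Fin n → ℝ)
    (Qhat : Fin n → Fin n → ℝ)
    (hQhat : SignPattern xs Qhat)
    (α : ℝ) (hα : 0 < α) :
    ∃ lam0 : ℝ, 0 ≤ lam0 ∧ lam0 < 1 ∧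
      ∀ lam : ℝ, lam0 < lam → lam ≤ 1 →
        SignPattern xs (fun i j => (1 - lam) * Q i j + lam * α * Qhat i j) ∧
        (∀ k, (1 - lam) * fQ Q (flipBit xs k) + lam * α * fQ Qhat (flipBit xs k)
            ≤ (1 - lam) * fQ Q xs + lam * α * fQ Qhat xs) ∧
        (∀ x : Fin n → ℝ, IsBinary x →
          (∀ k, (1 - lam) * fQ Q (flipBit x k) + lam * α * fQ Qhat (flipBit x k)
              ≤ (1 - lam) * fQ Q x + lam * α * fQ Qhat x) → x = xs) ∧
        (∀ x : Fin n → ℝ, IsBinary x → x ≠ xs →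
          (1 - lam) * fQ Q x + lam * α * fQ Qhat x
            < (1 - lam) * fQ Q xs + lam * α * fQ Qhat xs) := by
  obtain ⟨l, hl1, hmix⟩ := exists_Ioc_signPattern_mix Q Qhat hQhat hα
  refine ⟨max 0 l, le_max_left _ _, max_lt one_pos hl1, fun lam hlam hlam1 => ?_⟩
  have hM := hmix lam ⟨(le_max_right _ _).trans_lt hlam, hlam1⟩
  simp only [← fQ_add_mul]
  exact ⟨hM, hM.isFlipLocalMax hxs, fun x hx => hM.eq_of_isFlipLocalMax hxs hx,
    fun x hx hne => hM.fQ_lt_of_ne hxs hx hne⟩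

/-- HC transformation: for any symmetric `Q`, any symmetric `Q̂` with the
`x⋆`-sign pattern and any `α > 0`, there is `λ₀ ∈ [0,1)` such that for all `λ ∈ (λ₀, 1]` the
matrix `(1−λ)Q + λαQ̂` has the `x⋆`-sign pattern, and `x⋆` is the unique 1-bit-flip local
maximum and unique global maximum of the smoothed objective `g_λ` on `{0,1}^n`. -/
theorem hc_transformation_unimodal_for_large_lambda {n : ℕ} (hn : 0 < n)
    (xs : Fin n → ℝ) (hxs : IsBinary xs)
    (Q : Fin n → Fin n → ℝ) (hQsymm : ∀ i j, Q i j = Q j i)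
    (Qhat : Fin n → Fin n → ℝ) (hQhatsymm : ∀ i j, Qhat i j = Qhat j i)
    (hQhat : SignPattern xs Qhat)
    (α : ℝ) (hα : 0 < α) :
    ∃ lam0 : ℝ, 0 ≤ lam0 ∧ lam0 < 1 ∧
      ∀ lam : ℝ, lam0 < lam → lam ≤ 1 →
        SignPattern xs (fun i j => (1 - lam) * Q i j + lam * α * Qhat i j) ∧
        (∀ k, (1 - lam) * fQ Q (flipBit xs k) + lam * α * fQ Qhat (flipBit xs k)
            ≤ (1 - lam) * fQ Q xs + lam * α * fQ Qhat xs) ∧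
        (∀ x : Fin n → ℝ, IsBinary x →
          (∀ k, (1 - lam) * fQ Q (flipBit x k) + lam * α * fQ Qhat (flipBit x k)
              ≤ (1 - lam) * fQ Q x + lam * α * fQ Qhat x) → x = xs) ∧
        (∀ x : Fin n → ℝ, IsBinary x → x ≠ xs →
          (1 - lam) * fQ Q x + lam * α * fQ Qhat x
            < (1 - lam) * fQ Q xs + lam * α * fQ Qhat xs) :=
  hc_transformation_unimodal_for_large_lambda_general xs hxs Q Qhat hQhat α hα
end
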